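/- Any bounded complex random variable Z is almost surely contained in some closed disk of radius (1/√3)·diam Z. -/

import Mathlib

/-!
The law of `Z` has compact support `S` of diameter at most `probDiam μ Z`, and `Z ∈ S` almost
surely, so it suffices to prove Jung's theorem for a compact set `S` of diameter `d` in a Euclidean
space of dimension `n`. Let `a` minimise the largest distance `R` from `a` to `S`. If `a` were not
in the closed convex hull of the points of `S` at distance `R`, a separating direction would be a
direction of descent; so `a` is a limit of barycentres of at most `n + 1` (Carathéodory) such
points. For weights `wᵢ` with barycentre `x`,
`∑ wᵢ ‖zᵢ - x‖² = ½ ∑ wᵢ wⱼ ‖zᵢ - zⱼ‖² ≤ ½ d² (1 - ∑ wᵢ²) ≤ ½ d² (1 - 1 / (n + 1))`,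
hence `2 (n + 1) R² ≤ n d²`, i.e. `R ≤ d / √3` in the plane.
-/

open MeasureTheory

/-- The diameter of (the support of) a complex random variable:
`inf { c : P(|Z₁ - Z₂| > c) = 0 }` for independent copies `Z₁, Z₂`. -/
noncomputable def probDiam {Ω : Type*} [MeasurableSpace Ω] (μ : Measure Ω)
    (Z : Ω → ℂ) : ℝ :=
  sInf {c : ℝ | (μ.prod μ) {p | c < ‖Z p.1 - Z p.2‖} = 0}

open Metric Module Filter Topology

section Variance

variable {E : Type*} [NormedAddCommGroup E] [InnerProductSpace ℝ E] {ι : Type*} [Fintype ι]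

lemma sum_sum_mul_norm_sub_sq (w : ι → ℝ) (v : ι → E) :
    ∑ i, ∑ j, w i * w j * ‖v i - v j‖ ^ 2
      = 2 * (∑ i, w i) * (∑ i, w i * ‖v i‖ ^ 2) - 2 * ‖∑ i, w i • v i‖ ^ 2 := by
  have hsq : ‖∑ i, w i • v i‖ ^ 2 = ∑ i, ∑ j, w i * w j * inner ℝ (v i) (v j) := by
    simp only [← real_inner_self_eq_norm_sq, sum_inner, inner_sum, real_inner_smul_left,
      real_inner_smul_right, mul_assoc]
    rw [Finset.sum_comm]
    exact Finset.sum_congr rfl fun _ _ ↦ Finset.sum_congr rfl fun _ _ ↦ mul_left_comm _ _ _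
  have hswap : ∑ i, ∑ j, w i * w j * ‖v j‖ ^ 2 = ∑ i, ∑ j, w i * w j * ‖v i‖ ^ 2 := by
    rw [Finset.sum_comm]; simp only [mul_comm (w _) (w _)]
  simp only [hsq, norm_sub_sq_real, mul_sub, mul_add, Finset.sum_add_distrib, hswap,
    Finset.mul_sum, Finset.sum_mul, ← Finset.sum_sub_distrib]
  simp only [← Finset.sum_add_distrib]
  exact Finset.sum_congr rfl fun _ _ ↦ Finset.sum_congr rfl fun _ _ ↦ by ring

lemma two_mul_card_mul_sum_mul_norm_sub_sq_le {w : ι → ℝ} {v : ι → E} {d : ℝ}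
    (hw0 : ∀ i, 0 ≤ w i) (hw1 : ∑ i, w i = 1) (hd : ∀ i j, ‖v i - v j‖ ≤ d) :
    2 * Fintype.card ι * ∑ i, w i * ‖v i - ∑ k, w k • v k‖ ^ 2
      ≤ (Fintype.card ι - 1) * d ^ 2 := by
  classical
  set c := ∑ k, w k • v k
  have hcentered : ∑ i, w i • (v i - c) = 0 := by
    simp only [smul_sub, Finset.sum_sub_distrib, ← Finset.sum_smul, hw1, one_smul, c, sub_self]
  have hvar := sum_sum_mul_norm_sub_sq w (fun i ↦ v i - c)
  simp only [sub_sub_sub_cancel_right, hcentered, hw1, norm_zero] at hvar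
  have hpair : ∑ i, ∑ j, w i * w j * ‖v i - v j‖ ^ 2 ≤ d ^ 2 * (1 - ∑ i, w i ^ 2) := calc
    _ ≤ ∑ i, ∑ j, w i * w j * (d ^ 2 - if i = j then d ^ 2 else 0) := by
      gcongr with i _ j _
      · exact mul_nonneg (hw0 i) (hw0 j)
      · split_ifs with h
        · simp [h]
        · simpa using pow_le_pow_left₀ (norm_nonneg _) (hd i j) 2
    _ = d ^ 2 * (1 - ∑ i, w i ^ 2) := by
      simp only [mul_sub, Finset.sum_sub_distrib, mul_ite, mul_zero, Finset.sum_ite_eq,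
        Finset.mem_univ, if_true, ← Finset.sum_mul, ← Finset.mul_sum, hw1, ← sq]
      ring
  have hcs : 1 ≤ Fintype.card ι * ∑ i, w i ^ 2 := by
    simpa [hw1] using sq_sum_le_card_mul_sum_sq (s := Finset.univ) (f := w)
  nlinarith [mul_le_mul_of_nonneg_left hpair (Nat.cast_nonneg (Fintype.card ι) : (0 : ℝ) ≤ _),
    mul_le_mul_of_nonneg_left hcs (sq_nonneg d)]

end Variance

section ConvexHull

variable {E : Type*} [NormedAddCommGroup E] [InnerProductSpace ℝ E] [FiniteDimensional ℝ E]

lemma two_mul_finrank_succ_mul_infDist_sq_le_of_mem_convexHull {T : Set E} {d : ℝ}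
    (hd : ∀ z ∈ T, ∀ w ∈ T, dist z w ≤ d) {x : E} (hx : x ∈ convexHull ℝ T) :
    2 * (finrank ℝ E + 1) * infDist x T ^ 2 ≤ finrank ℝ E * d ^ 2 := by
  obtain ⟨ι, _, z, w, hzT, hai, hw0, hw1, rfl⟩ := eq_pos_convex_span_of_mem_convexHull hx
  have hz : ∀ i, z i ∈ T := fun i ↦ hzT ⟨i, rfl⟩
  have hk : (Fintype.card ι : ℝ) ≤ finrank ℝ E + 1 := by
    exact_mod_cast hai.card_le_finrank_succ.trans (Nat.succ_le_succ (Submodule.finrank_le _))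
  have hk0 : (0 : ℝ) < Fintype.card ι := by
    have : Nonempty ι := by
      by_contra h
      simp [not_nonempty_iff.mp h] at hw1
    exact_mod_cast Fintype.card_pos
  have hρ : infDist (∑ i, w i • z i) T ^ 2 ≤ ∑ i, w i * ‖z i - ∑ k, w k • z k‖ ^ 2 := calc
    _ = ∑ i, w i * infDist (∑ i, w i • z i) T ^ 2 := by rw [← Finset.sum_mul, hw1, one_mul]
    _ ≤ _ := by
      gcongr with i
      · exact (hw0 i).le
      · exact infDist_nonneg
      · rw [← dist_eq_norm, dist_comm]
        exact infDist_le_dist_of_mem (hz i)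
  have hvar := two_mul_card_mul_sum_mul_norm_sub_sq_le (fun i ↦ (hw0 i).le) hw1
    fun i j ↦ (dist_eq_norm (z i) (z j)) ▸ hd _ (hz i) _ (hz j)
  have h1 :=
    (mul_le_mul_of_nonneg_left hρ (by positivity : (0 : ℝ) ≤ 2 * Fintype.card ι)).trans hvar
  nlinarith [mul_le_mul_of_nonneg_left h1 (by positivity : (0 : ℝ) ≤ finrank ℝ E + 1),
    mul_le_mul_of_nonneg_right hk (sq_nonneg d)]

lemma two_mul_finrank_succ_mul_infDist_sq_le_of_mem_closure_convexHull {T : Set E} {d : ℝ}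
    (hd : ∀ z ∈ T, ∀ w ∈ T, dist z w ≤ d) {x : E} (hx : x ∈ closure (convexHull ℝ T)) :
    2 * (finrank ℝ E + 1) * infDist x T ^ 2 ≤ finrank ℝ E * d ^ 2 :=
  closure_minimal (fun _ ↦ two_mul_finrank_succ_mul_infDist_sq_le_of_mem_convexHull hd)
    (isClosed_le (continuous_const.mul ((continuous_infDist_pt T).pow 2)) continuous_const) hx

end ConvexHull

noncomputable def farthestDist {α : Type*} [PseudoMetricSpace α] (S : Set α) (a : α) : ℝ :=
  sSup ((dist · a) '' S)

namespace IsCompact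

variable {α : Type*} [PseudoMetricSpace α] {S : Set α}

lemma dist_le_farthestDist (hS : IsCompact S) {z : α} (hz : z ∈ S) (a : α) :
    dist z a ≤ farthestDist S a :=
  le_csSup (hS.bddAbove_image (continuous_id.dist continuous_const).continuousOn) ⟨z, hz, rfl⟩

lemma exists_dist_eq_farthestDist (hS : IsCompact S) (hne : S.Nonempty) (a : α) :
    ∃ z ∈ S, dist z a = farthestDist S a := by
  obtain ⟨z, hz, h⟩ :=
    hS.exists_sSup_image_eq hne (continuous_id.dist (continuous_const (y := a))).continuousOn
  exact ⟨z, hz, h.symm⟩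

lemma farthestDist_lt_iff (hS : IsCompact S) (hne : S.Nonempty) {a : α} {r : ℝ} :
    farthestDist S a < r ↔ ∀ z ∈ S, dist z a < r :=
  hS.sSup_lt_iff_of_continuous hne (continuous_id.dist continuous_const).continuousOn r

lemma lipschitzWith_farthestDist (hS : IsCompact S) (hne : S.Nonempty) :
    LipschitzWith 1 (farthestDist S) :=
  LipschitzWith.of_le_add fun a b ↦ by
    obtain ⟨z, hz, hza⟩ := hS.exists_dist_eq_farthestDist hne a
    have := hS.dist_le_farthestDist hz b
    linarith [dist_triangle z b a, dist_comm a b]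

lemma exists_forall_farthestDist_le [ProperSpace α] (hS : IsCompact S) (hne : S.Nonempty) :
    ∃ a, ∀ b, farthestDist S a ≤ farthestDist S b := by
  obtain ⟨z, hz⟩ := hne
  have : Nonempty α := ⟨z⟩
  exact (hS.lipschitzWith_farthestDist ⟨z, hz⟩).continuous.exists_forall_le <|
    tendsto_atTop_mono (hS.dist_le_farthestDist hz) (tendsto_dist_left_cocompact_atTop z)

end IsCompact

lemma IsCompact.exists_pos_forall_le_sub {β : Type*} [TopologicalSpace β] {K : Set β}
    (hK : IsCompact K) {f : β → ℝ} (hf : ContinuousOn f K) {R : ℝ} (h : ∀ x ∈ K, f x < R) :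
    ∃ ε > 0, ∀ x ∈ K, f x ≤ R - ε := by
  rcases K.eq_empty_or_nonempty with rfl | hne
  · exact ⟨1, one_pos, by simp⟩
  obtain ⟨x₀, hx₀, hmax⟩ := hK.exists_isMaxOn hne hf
  exact ⟨R - f x₀, by linarith [h x₀ hx₀], fun x hx ↦ by linarith [show f x ≤ f x₀ from hmax hx]⟩

section ChebyshevCenter

variable {E : Type*} [NormedAddCommGroup E] [InnerProductSpace ℝ E] {S : Set E}

lemma IsCompact.exists_farthestDist_lt_of_le_inner (hS : IsCompact S) (hne : S.Nonempty)
    {a u : E} {δ : ℝ} (hδ : 0 < δ)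
    (hu : ∀ z ∈ S, dist z a = farthestDist S a → δ ≤ inner ℝ u (z - a)) :
    ∃ b, farthestDist S b < farthestDist S a := by
  set R := farthestDist S a
  -- Far points have a component `> δ / 2` along `u`, so moving the centre by `t • u` brings them
  -- closer; the remaining points of `S` keep a margin `ε` below `R`.
  have hdist : ∀ z ∈ S, dist z a ≤ R := fun z hz ↦ hS.dist_le_farthestDist hz a
  obtain ⟨ε, hε, hfar⟩ : ∃ ε > 0, ∀ z ∈ S ∩ {z | inner ℝ u (z - a) ≤ δ / 2}, dist z a ≤ R - ε :=
    (hS.inter_right (isClosed_le (by fun_prop) continuous_const)).exists_pos_forall_le_sub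
      (continuous_id.dist continuous_const).continuousOn
      fun z ⟨hz, (hzu : inner ℝ u (z - a) ≤ δ / 2)⟩ ↦
        (hdist z hz).lt_of_ne fun hzR ↦ by linarith [hu z hz hzR]
  have hsmall : ∀ᶠ t in 𝓝 (0 : ℝ), t * ‖u‖ < ε ∧ t * ‖u‖ ^ 2 < δ :=
    ((continuous_id.mul continuous_const).tendsto' 0 0 (zero_mul _)).eventually
        (eventually_lt_nhds hε) |>.and <|
      ((continuous_id.mul continuous_const).tendsto' 0 0 (zero_mul _)).eventually
        (eventually_lt_nhds hδ)
  obtain ⟨t, ⟨htε, htδ⟩, ht0 : 0 < t⟩ :=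
    ((hsmall.filter_mono nhdsWithin_le_nhds).and (self_mem_nhdsWithin (s := Set.Ioi 0))).exists
  refine ⟨a + t • u, (hS.farthestDist_lt_iff hne).2 fun z hz ↦ ?_⟩
  have hnorm : ‖t • u‖ = t * ‖u‖ := by rw [norm_smul, Real.norm_of_nonneg ht0.le]
  rcases le_or_gt (inner ℝ u (z - a)) (δ / 2) with hzu | hzu
  · calc dist z (a + t • u) ≤ dist z a + dist a (a + t • u) := dist_triangle _ _ _
      _ = dist z a + t * ‖u‖ := by rw [dist_self_add_right, hnorm]
      _ < R := by linarith [hfar z ⟨hz, hzu⟩]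
  · have hR : 0 ≤ R := dist_nonneg.trans (hdist z hz)
    refine lt_of_pow_lt_pow_left₀ 2 hR ?_
    have hsq : dist z (a + t • u) ^ 2
        = dist z a ^ 2 - 2 * t * inner ℝ u (z - a) + t * (t * ‖u‖ ^ 2) := by
      rw [dist_eq_norm, dist_eq_norm, show z - (a + t • u) = (z - a) - t • u by abel,
        norm_sub_sq_real, inner_smul_right, real_inner_comm, hnorm]
      ring
    rw [hsq]
    nlinarith [hdist z hz, dist_nonneg (x := z) (y := a), mul_lt_mul_of_pos_left hzu ht0,
      mul_lt_mul_of_pos_left htδ ht0]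

lemma IsCompact.mem_closure_convexHull_farthest_of_forall_le [CompleteSpace E] (hS : IsCompact S)
    (hne : S.Nonempty) {a : E} (ha : ∀ b, farthestDist S a ≤ farthestDist S b) :
    a ∈ closure (convexHull ℝ {z ∈ S | dist z a = farthestDist S a}) := by
  by_contra h
  obtain ⟨φ, s, hφa, hφ⟩ :=
    geometric_hahn_banach_point_closed (convex_convexHull ℝ _).closure isClosed_closure h
  obtain ⟨b, hb⟩ := hS.exists_farthestDist_lt_of_le_inner hne
    (u := (InnerProductSpace.toDual ℝ E).symm φ) (sub_pos.2 hφa) fun z hz hzR ↦ by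
      rw [InnerProductSpace.toDual_symm_apply, map_sub]
      linarith [hφ z (subset_closure (subset_convexHull ℝ _ ⟨hz, hzR⟩))]
  exact (ha b).not_gt hb

end ChebyshevCenter

theorem jung_theorem {E : Type*} [NormedAddCommGroup E] [InnerProductSpace ℝ E]
    [FiniteDimensional ℝ E] {S : Set E} (hS : IsCompact S) {d : ℝ}
    (hd : ∀ z ∈ S, ∀ w ∈ S, dist z w ≤ d) :
    ∃ a, ∀ z ∈ S, 2 * (finrank ℝ E + 1) * dist z a ^ 2 ≤ finrank ℝ E * d ^ 2 := by
  rcases S.eq_empty_or_nonempty with rfl | hne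
  · exact ⟨0, by simp⟩
  obtain ⟨a, ha⟩ := hS.exists_forall_farthestDist_le hne
  set T := {z ∈ S | dist z a = farthestDist S a}
  have hT : T.Nonempty := hS.exists_dist_eq_farthestDist hne a
  have hR : farthestDist S a ≤ infDist a T :=
    (le_infDist hT).2 fun y hy ↦ dist_comm a y ▸ hy.2.ge
  have hbound := two_mul_finrank_succ_mul_infDist_sq_le_of_mem_closure_convexHull
    (fun z hz w hw ↦ hd z hz.1 w hw.1) (hS.mem_closure_convexHull_farthest_of_forall_le hne ha)
  refine ⟨a, fun z hz ↦ le_trans ?_ hbound⟩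
  gcongr
  exact (hS.dist_le_farthestDist hz a).trans hR

theorem Complex.exists_norm_sub_le_inv_sqrt_three_mul {S : Set ℂ} (hS : IsCompact S) {d : ℝ}
    (hd : ∀ z ∈ S, ∀ w ∈ S, ‖z - w‖ ≤ d) : ∃ a, ∀ z ∈ S, ‖z - a‖ ≤ 1 / √3 * d := by
  obtain ⟨a, ha⟩ := jung_theorem hS (d := d) (by simpa only [dist_eq_norm] using hd)
  refine ⟨a, fun z hz ↦ ?_⟩
  have hd0 : 0 ≤ d := by simpa using hd z hz z hz
  have h := ha z hz
  rw [Complex.finrank_real_complex, dist_eq_norm] at h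
  rw [one_div, ← div_eq_inv_mul, le_div_iff₀ (by positivity)]
  refine le_of_pow_le_pow_left₀ two_ne_zero hd0 ?_
  rw [mul_pow, Real.sq_sqrt (by norm_num)]
  push_cast at h
  linarith

section Support

variable {Ω : Type*} [MeasurableSpace Ω] {μ : Measure Ω}

lemma norm_sub_le_of_mem_support_map {E : Type*} [NormedAddCommGroup E] [MeasurableSpace E]
    [OpensMeasurableSpace E] [SFinite μ] {Z : Ω → E} (hm : Measurable Z) {z w : E}
    (hz : z ∈ (μ.map Z).support) (hw : w ∈ (μ.map Z).support) {c : ℝ}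
    (hc : (μ.prod μ) {p | c < ‖Z p.1 - Z p.2‖} = 0) : ‖z - w‖ ≤ c := by
  by_contra! h
  set ε := (‖z - w‖ - c) / 2
  have hpos : ∀ y ∈ (μ.map Z).support, μ (Z ⁻¹' ball y ε) ≠ 0 := fun y hy ↦ by
    rw [← Measure.map_apply hm measurableSet_ball]
    exact ((Measure.mem_support_iff_forall y).1 hy _ (ball_mem_nhds y (by simp [ε, h]))).ne'
  have hsub : (Z ⁻¹' ball z ε) ×ˢ (Z ⁻¹' ball w ε) ⊆ {p | c < ‖Z p.1 - Z p.2‖} := by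
    rintro p ⟨h1 : dist (Z p.1) z < ε, h2 : dist (Z p.2) w < ε⟩
    have := dist_triangle4 z (Z p.1) (Z p.2) w
    rw [dist_eq_norm z w, dist_eq_norm (Z p.1), dist_comm z] at this
    show c < ‖Z p.1 - Z p.2‖
    linarith [show 2 * ε = ‖z - w‖ - c by ring]
  have h0 := measure_mono_null hsub hc
  rw [Measure.prod_prod] at h0
  exact mul_ne_zero (hpos z hz) (hpos w hw) h0

lemma measure_prod_two_mul_lt_norm_sub_eq_zero {E : Type*} [NormedAddCommGroup E] [SFinite μ]
    {Z : Ω → E} {C : ℝ} (hbdd : ∀ᵐ ω ∂μ, ‖Z ω‖ ≤ C) :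
    (μ.prod μ) {p | 2 * C < ‖Z p.1 - Z p.2‖} = 0 := by
  have h1 : ∀ᵐ p ∂μ.prod μ, ‖Z p.1‖ ≤ C := Measure.quasiMeasurePreserving_fst.ae hbdd
  have h2 : ∀ᵐ p ∂μ.prod μ, ‖Z p.2‖ ≤ C := Measure.quasiMeasurePreserving_snd.ae hbdd
  simpa only [not_le] using ae_iff.1 <| (h1.and h2).mono fun p hp ↦
    (norm_sub_le (Z p.1) (Z p.2)).trans (by linarith [hp.1, hp.2])

lemma norm_sub_le_probDiam [SFinite μ] {Z : Ω → ℂ} (hm : Measurable Z) {C : ℝ}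
    (hbdd : ∀ᵐ ω ∂μ, ‖Z ω‖ ≤ C) {z w : ℂ} (hz : z ∈ (μ.map Z).support)
    (hw : w ∈ (μ.map Z).support) : ‖z - w‖ ≤ probDiam μ Z :=
  le_csInf ⟨2 * C, measure_prod_two_mul_lt_norm_sub_eq_zero hbdd⟩ fun _ hc ↦
    norm_sub_le_of_mem_support_map hm hz hw hc

lemma isCompact_support_map {E : Type*} [NormedAddCommGroup E] [ProperSpace E]
    [MeasurableSpace E] [OpensMeasurableSpace E] {Z : Ω → E} (hm : AEMeasurable Z μ) {C : ℝ}
    (hbdd : ∀ᵐ ω ∂μ, ‖Z ω‖ ≤ C) : IsCompact (μ.map Z).support :=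
  (isCompact_closedBall 0 C).of_isClosed_subset Measure.isClosed_support <|
    Measure.support_subset_of_isClosed isClosed_closedBall <|
      (ae_map_iff hm measurableSet_closedBall).2 <| by
        simpa only [mem_closedBall, dist_zero_right] using hbdd

end Support

theorem confined_to_disk {Ω : Type*} [MeasurableSpace Ω] (μ : Measure Ω)
    [IsProbabilityMeasure μ] (Z : Ω → ℂ) (hm : Measurable Z)
    (C : ℝ) (hbdd : ∀ᵐ ω ∂μ, ‖Z ω‖ ≤ C) :
    ∃ a : ℂ, ∀ᵐ ω ∂μ, ‖Z ω - a‖ ≤ (1 / Real.sqrt 3) * probDiam μ Z := by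
  obtain ⟨a, ha⟩ := Complex.exists_norm_sub_le_inv_sqrt_three_mul
    (isCompact_support_map hm.aemeasurable hbdd)
    fun _ hz _ hw ↦ norm_sub_le_probDiam hm hbdd hz hw
  exact ⟨a, (ae_of_ae_map hm.aemeasurable Measure.support_mem_ae).mono fun ω hω ↦ ha _ hω⟩
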